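/- arXiv:1810.01136 — 7 statements merged into one kernel-verified Lean document; each statement's English description precedes it below -/
import Mathlib

section
/- Let G be a connected graph and T a nonempty subset of its vertices. Suppose every vertex of G is within distance K (in the graph metric) of some vertex of T. Then G contains a connected subgraph (a Steiner tree) containing all of T with at most (2K+1)(|T|-1) edges. -/
/-!
Call two terminals `a, b ∈ T` close if `G.edist a b ≤ 2K + 1`. Walking along any path between two
terminals and replacing each vertex by a terminal within distance `K` shows that the closeness
relation connects `T`. Starting from a single terminal, repeatedly attach a new terminal close to
one already reached by a shortest path to it: each step adds one terminal and at most `2K + 1`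
edges, and keeps the subgraph connected.
-/

open Relation

namespace Relation.ReflTransGen

theorem exists_mem_notMem_of_mem_of_notMem {α : Type*} {r : α → α → Prop} {S : Set α} {x y : α}
    (h : ReflTransGen r x y) (hx : x ∈ S) (hy : y ∉ S) :
    ∃ a ∈ S, ∃ b ∉ S, r a b := by
  induction h with
  | refl => exact absurd hx hy
  | @tail b c _ hbc ih =>
    by_cases hb : b ∈ S
    · exact ⟨b, hb, c, hy, hbc⟩
    · exact ih hb

end Relation.ReflTransGen

namespace SimpleGraph

variable {V : Type*} {G : SimpleGraph V}

theorem exists_walk_length_le_of_edist_le {u v : V} {d : ℕ} (h : G.edist u v ≤ d) :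
    ∃ p : G.Walk u v, p.length ≤ d := by
  obtain ⟨p, hp⟩ := exists_walk_of_edist_ne_top (ne_top_of_le_ne_top (ENat.natCast_ne_top d) h)
  exact ⟨p, by exact_mod_cast hp ▸ h⟩

theorem Walk.ncard_edgeSet_le_length {u v : V} (p : G.Walk u v) :
    p.edgeSet.ncard ≤ p.length := by
  classical
  have hedges : p.edgeSet = ↑p.edges.toFinset := by ext; simp [Walk.edgeSet]
  rw [hedges, Set.ncard_coe_finset, ← p.length_edges]
  exact List.toFinset_card_le _

namespace Subgraph

theorem Connected.sup_toSubgraph {H : G.Subgraph} (hH : H.Connected) {a b : V} (ha : a ∈ H.verts)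
    (p : G.Walk a b) : (H ⊔ p.toSubgraph).Connected :=
  connected_sup hH.preconnected p.toSubgraph_connected.preconnected
    ⟨a, ha, p.start_mem_verts_toSubgraph⟩

theorem ncard_edgeSet_sup_toSubgraph_le (H : G.Subgraph) {a b : V} (p : G.Walk a b) :
    (H ⊔ p.toSubgraph).edgeSet.ncard ≤ H.edgeSet.ncard + p.length := by
  rw [edgeSet_sup, Walk.edgeSet_toSubgraph]
  exact (Set.ncard_union_le _ _).trans (Nat.add_le_add_left p.ncard_edgeSet_le_length _)

end Subgraph

theorem exists_connected_subgraph_of_reflTransGen {T : Set V} (hT : T.Finite) {t₀ : V}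
    (ht₀ : t₀ ∈ T) {d : ℕ}
    (hchain : ∀ t ∈ T, ReflTransGen (fun a b => b ∈ T ∧ G.edist a b ≤ d) t₀ t) :
    ∃ H : G.Subgraph, H.Connected ∧ T ⊆ H.verts ∧ H.edgeSet.ncard ≤ d * (T.ncard - 1) := by
  refine (hT.induction_to (C := fun S => t₀ ∈ S ∧ ∃ H : G.Subgraph, H.Connected ∧ S ⊆ H.verts ∧
      H.edgeSet.ncard ≤ d * (S.ncard - 1)) {t₀} (Set.singleton_subset_iff.mpr ht₀)
    ⟨rfl, G.singletonSubgraph t₀, Subgraph.singletonSubgraph_connected, by simp, by simp⟩ ?_).2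
  rintro S hST ⟨ht₀S, H, hH, hSH, hHS⟩
  obtain ⟨t, htT, htS⟩ := Set.exists_of_ssubset hST
  obtain ⟨a, haS, b, hbS, hbT, hab⟩ :=
    (hchain t htT).exists_mem_notMem_of_mem_of_notMem ht₀S htS
  obtain ⟨p, hp⟩ := exists_walk_length_le_of_edist_le hab
  refine ⟨b, ⟨hbT, hbS⟩, Set.mem_insert_of_mem b ht₀S, H ⊔ p.toSubgraph,
    hH.sup_toSubgraph (hSH haS) p,
    Set.insert_subset (Or.inr p.end_mem_verts_toSubgraph) fun x hx => Or.inl (hSH hx), ?_⟩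
  have hSfin : S.Finite := hT.subset hST.subset
  obtain ⟨m, hm⟩ : ∃ m, S.ncard = m + 1 :=
    Nat.exists_eq_add_one.mpr ((Set.ncard_pos hSfin).mpr ⟨t₀, ht₀S⟩)
  rw [Set.ncard_insert_of_notMem hbS hSfin, hm]
  rw [hm] at hHS
  calc (H ⊔ p.toSubgraph).edgeSet.ncard ≤ H.edgeSet.ncard + p.length :=
        H.ncard_edgeSet_sup_toSubgraph_le p
    _ ≤ d * m + d := by simpa using Nat.add_le_add hHS hp
    _ = d * (m + 1 + 1 - 1) := by simp [Nat.mul_succ]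

theorem reflTransGen_edist_le_of_walk {T : Set V} {K : ℕ} (hcov : ∀ v : V, ∃ t ∈ T, G.edist t v ≤ K)
    {v t : V} (p : G.Walk v t) (ht : t ∈ T) {s : V} (hs : s ∈ T) (hsv : G.edist s v ≤ K) :
    ReflTransGen (fun a b => b ∈ T ∧ G.edist a b ≤ ↑(2 * K + 1)) s t := by
  induction p generalizing s with
  | nil => exact ReflTransGen.single ⟨ht, hsv.trans (by norm_cast; omega)⟩
  | @cons u w _ huw p ih =>
    obtain ⟨s', hs', hs'w⟩ := hcov w
    have hss' : G.edist s s' ≤ ↑(2 * K + 1) :=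
      calc G.edist s s' ≤ G.edist s u + G.edist u w + G.edist w s' :=
            G.edist_triangle.trans (add_le_add_left G.edist_triangle _)
        _ ≤ K + 1 + K := by
            gcongr
            · exact (edist_eq_one_iff_adj.mpr huw).le
            · exact edist_comm.le.trans hs'w
        _ = ↑(2 * K + 1) := by push_cast; ring
    exact ReflTransGen.head ⟨hs', hss'⟩ (ih ht hs' hs'w)

end SimpleGraph

open SimpleGraph in
/-- Let `G` be a connected graph and `T` a nonempty subset of its
vertices. Suppose every vertex of `G` is within distance `K` of some vertex of `T`.
Then `G` contains a connected subgraph containing all of `T` with at most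
`(2K+1)(|T|-1)` edges. -/
theorem steiner_tree_of_bounded_distance {V : Type*} [Fintype V]
    (G : SimpleGraph V) (hG : G.Connected) (T : Set V) (hT : T.Nonempty) (K : ℕ)
    (hcov : ∀ v : V, ∃ t ∈ T, G.dist t v ≤ K) :
    ∃ H : G.Subgraph, H.Connected ∧ T ⊆ H.verts ∧
      H.edgeSet.ncard ≤ (2 * K + 1) * (T.ncard - 1) := by
  obtain ⟨t₀, ht₀⟩ := hT
  have hcov' : ∀ v : V, ∃ t ∈ T, G.edist t v ≤ K := fun v => by
    obtain ⟨t, ht, htv⟩ := hcov v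
    exact ⟨t, ht, (hG t v).coe_dist_eq_edist ▸ by exact_mod_cast htv⟩
  refine exists_connected_subgraph_of_reflTransGen (Set.toFinite T) ht₀ fun t ht => ?_
  obtain ⟨p⟩ := hG t₀ t
  exact reflTransGen_edist_le_of_walk hcov' p ht ht₀ (by simp)
end

section
/- Let G be a connected graph, T ⊆ V(G), and let H be obtained from G by contracting each tree of a spanning forest of depth at most K rooted at the vertices of T. Then for each edge of H between two terminals t1, t2 there is a path in G between t1 and t2 with at most 2K+1 edges. -/
/-- Let `G` be a connected graph, `T ⊆ V(G)`, and suppose every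
vertex `v` is assigned a root `ρ v ∈ T` (its root in a spanning forest of depth at
most `K` rooted at the terminals), so that `v` is joined to `ρ v` by a path of at
most `K` edges. If `H` (the contraction of the forest, on vertex set `T`) has an
edge between terminals `t₁, t₂`, i.e. there are adjacent vertices `u, v` of `G`
with `ρ u = t₁` and `ρ v = t₂`, then there is a path in `G` between `t₁` and `t₂`
with at most `2K+1` edges. -/
theorem contracted_edge_short_path {V : Type*} (G : SimpleGraph V)
    (hG : G.Connected) (T : Set V) (K : ℕ) (ρ : V → V)
    (hρT : ∀ v : V, ρ v ∈ T) (hfix : ∀ t ∈ T, ρ t = t)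
    (hdepth : ∀ v : V, ∃ p : G.Walk v (ρ v), p.IsPath ∧ p.length ≤ K)
    (t₁ t₂ : V) (ht₁ : t₁ ∈ T) (ht₂ : t₂ ∈ T) (hne : t₁ ≠ t₂)
    (hedge : ∃ u v : V, ρ u = t₁ ∧ ρ v = t₂ ∧ G.Adj u v) :
    ∃ q : G.Walk t₁ t₂, q.IsPath ∧ q.length ≤ 2 * K + 1 := by
  obtain ⟨u, v, hu, hv, huv⟩ := hedge
  obtain ⟨p₁, hp₁, hl₁⟩ := hdepth u
  obtain ⟨p₂, hp₂, hl₂⟩ := hdepth v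
  subst hu hv
  classical
  let w : G.Walk (ρ u) (ρ v) := p₁.reverse.append ((SimpleGraph.Walk.cons huv p₂))
  refine ⟨w.bypass, w.bypass_isPath, le_trans w.length_bypass_le ?_⟩
  simp only [w, SimpleGraph.Walk.length_append, SimpleGraph.Walk.length_reverse,
    SimpleGraph.Walk.length_cons]
  omega
end

section
/- Let G be a bipartite graph with parts A and B, T ⊆ A, and let C ⊆ B be a minimal set such that every connected component of G[C ∪ A] contains an even number of vertices of T. If |C| ≤ k and some vertex v ∈ C has distance at least k+2 in G[C ∪ A] to every vertex of T, then a contradiction arises; hence every vertex of a minimal such C of size at most k has distance at most k+1 in G[C ∪ A] to some vertex of T. -/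
/-- Reachability inside a vertex set: there is a walk whose support stays in `s`. -/
def SimpleGraph.ReachIn {V : Type*} (G : SimpleGraph V) (s : Set V) (u w : V) : Prop :=
  ∃ p : G.Walk u w, ∀ x ∈ p.support, x ∈ s

/-- `C` is a solution: every connected component of `G[C ∪ A]` contains an even
number of vertices of `T`. -/
def IsTJoinSolution {V : Type*} (G : SimpleGraph V) (A T C : Set V) : Prop :=
  ∀ v ∈ C ∪ A, Even (({w : V | G.ReachIn (C ∪ A) v w} ∩ T).ncard)

namespace SimpleGraph

variable {V : Type*} {G : SimpleGraph V} {s t : Set V} {u w x : V}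

lemma ReachIn.mem_left (h : G.ReachIn s u w) : u ∈ s := by
  obtain ⟨p, hp⟩ := h
  exact hp u p.start_mem_support

lemma ReachIn.mem_right (h : G.ReachIn s u w) : w ∈ s := by
  obtain ⟨p, hp⟩ := h
  exact hp w p.end_mem_support

lemma reachIn_refl (h : u ∈ s) : G.ReachIn s u u := by
  refine ⟨Walk.nil, ?_⟩
  intro x hx
  simp only [Walk.support_nil, List.mem_singleton] at hx
  subst hx; exact h

lemma ReachIn.symm (h : G.ReachIn s u w) : G.ReachIn s w u := by
  obtain ⟨p, hp⟩ := h
  exact ⟨p.reverse, fun x hx => hp x (by rwa [Walk.support_reverse, List.mem_reverse] at hx)⟩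

lemma ReachIn.trans (h₁ : G.ReachIn s u w) (h₂ : G.ReachIn s w x) : G.ReachIn s u x := by
  obtain ⟨p, hp⟩ := h₁; obtain ⟨q, hq⟩ := h₂
  refine ⟨p.append q, fun y hy => ?_⟩
  rw [Walk.mem_support_append_iff] at hy
  rcases hy with hy | hy
  · exact hp y hy
  · exact hq y hy

lemma reachIn_of_mem_support (p : G.Walk u w) (hp : ∀ z ∈ p.support, z ∈ s)
    (hx : x ∈ p.support) : G.ReachIn s u x := by
  classical
  exact ⟨p.takeUntil x hx, fun z hz => hp z (p.support_takeUntil_subset hx hz)⟩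

lemma ReachIn.mono (h : G.ReachIn s u w) (hst : s ⊆ t) : G.ReachIn t u w := by
  obtain ⟨p, hp⟩ := h
  exact ⟨p, fun z hz => hst (hp z hz)⟩

lemma ReachIn.adj (h : G.ReachIn s u w) (ha : G.Adj w x) (hx : x ∈ s) : G.ReachIn s u x := by
  refine h.trans ⟨Walk.cons ha Walk.nil, ?_⟩
  intro z hz
  simp only [Walk.support_cons, Walk.support_nil, List.mem_cons, List.not_mem_nil,
    or_false] at hz
  rcases hz with rfl | rfl
  · exact h.mem_right
  · exact hx

lemma ReachIn.setOf_eq (h : G.ReachIn s u w) :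
    {x | G.ReachIn s u x} = {x | G.ReachIn s w x} :=
  Set.ext fun _ => ⟨fun h2 => h.symm.trans h2, fun h2 => h.trans h2⟩

lemma reachIn_setOf_diff_singleton {c : V} (hcu : ¬ G.ReachIn s c u) :
    {x | G.ReachIn (s \ {c}) u x} = {x | G.ReachIn s u x} := by
  ext x
  constructor
  · exact fun h => h.mono Set.diff_subset
  · rintro ⟨p, hp⟩
    refine ⟨p, fun z hz => ⟨hp z hz, ?_⟩⟩
    intro hzc
    rw [Set.mem_singleton_iff] at hzc
    subst hzc
    exact hcu (reachIn_of_mem_support p hp hz).symm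

/-- From any walk `c → t` with `c ≠ t`, extract the part after the last visit of `c`. -/
lemma exists_last_exit (s : Set V) :
    ∀ n (c t' : V) (p : G.Walk c t'), p.length ≤ n → c ≠ t' → (∀ z ∈ p.support, z ∈ s) →
      ∃ (a : V) (_ : G.Adj c a) (q : G.Walk a t'),
        (∀ z ∈ q.support, z ∈ s) ∧ c ∉ q.support := by
  classical
  intro n
  induction n with
  | zero =>
    intro c t' p hl hne _
    exact absurd (Walk.eq_of_length_eq_zero (Nat.le_zero.mp hl)) hne
  | succ n ih =>
    intro c t' p hl hne hp
    cases p with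
    | nil => exact absurd rfl hne
    | @cons _ y _ h q =>
      by_cases hc : c ∈ q.support
      · refine ih c t' (q.dropUntil c hc) ?_ hne ?_
        · exact le_trans (q.length_dropUntil_le hc)
            (by simpa [Walk.length_cons, Nat.succ_le_succ_iff] using hl)
        · intro z hz
          exact hp z (by
            simp only [Walk.support_cons, List.mem_cons]
            exact Or.inr (q.support_dropUntil_subset hc hz))
      · exact ⟨y, h, q, fun z hz => hp z (by simp [Walk.support_cons, hz]), hc⟩

/-- A set partitioned into even reach-classes has even cardinality. -/
lemma even_ncard_of_classes_even [Fintype V] (T : Set V) (s : Set V) :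
    ∀ n (F : Set V), F.ncard ≤ n → F ⊆ s → F ⊆ T →
      (∀ t' ∈ F, Even (({w | G.ReachIn s t' w} ∩ T).ncard) ∧
        ({w | G.ReachIn s t' w} ∩ T) ⊆ F) →
      Even F.ncard := by
  intro n
  induction n with
  | zero =>
    intro F hF _ _ _
    simp [Nat.le_zero.mp hF]
  | succ n ih =>
    intro F hF hFs hFT hcl
    rcases F.eq_empty_or_nonempty with rfl | ⟨t', ht'⟩
    · simp
    have htCl : t' ∈ {w | G.ReachIn s t' w} ∩ T := ⟨reachIn_refl (hFs ht'), hFT ht'⟩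
    obtain ⟨hev, hsub⟩ := hcl t' ht'
    have hdisj : Disjoint ({w | G.ReachIn s t' w} ∩ T)
        (F \ ({w | G.ReachIn s t' w} ∩ T)) := Set.disjoint_sdiff_right
    have hcard : F.ncard = ({w | G.ReachIn s t' w} ∩ T).ncard +
        (F \ ({w | G.ReachIn s t' w} ∩ T)).ncard := by
      conv_lhs => rw [(Set.union_diff_cancel hsub).symm]
      exact Set.ncard_union_eq hdisj
    have hClpos : 0 < ({w | G.ReachIn s t' w} ∩ T).ncard := (Set.ncard_pos (Set.toFinite _)).mpr ⟨t', htCl⟩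
    have h1 : (F \ ({w | G.ReachIn s t' w} ∩ T)).ncard ≤ n := by omega
    have heven' : Even (F \ ({w | G.ReachIn s t' w} ∩ T)).ncard := by
      refine ih _ h1 (fun z hz => hFs hz.1) (fun z hz => hFT hz.1) ?_
      intro t'' ht''
      obtain ⟨hev'', hsub''⟩ := hcl t'' ht''.1
      refine ⟨hev'', fun w hw => ⟨hsub'' hw, fun hwCl => ?_⟩⟩
      exact ht''.2 ⟨hwCl.1.trans hw.1.symm, hFT ht''.1⟩
    rw [hcard]
    exact hev.add heven'

/-- Minimality gives two (distinct) odd components of `G[(C∪A) \ {c}]` inside the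
component of `c`. -/
lemma two_odd [Fintype V] (G : SimpleGraph V) (A T C : Set V)
    (hCA : ∀ c ∈ C, c ∉ A) (hTA : T ⊆ A)
    (hsol : IsTJoinSolution G A T C)
    (hmin : ∀ C' : Set V, C' ⊆ C → C' ≠ C → ¬ IsTJoinSolution G A T C')
    (c : V) (hc : c ∈ C) :
    ∃ t₀ ∈ T, ∃ t₁ ∈ T, G.ReachIn (C ∪ A) c t₀ ∧ G.ReachIn (C ∪ A) c t₁ ∧
      ¬ G.ReachIn ((C ∪ A) \ {c}) t₀ t₁ ∧
      Odd (({w | G.ReachIn ((C ∪ A) \ {c}) t₀ w} ∩ T).ncard) ∧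
      Odd (({w | G.ReachIn ((C ∪ A) \ {c}) t₁ w} ∩ T).ncard) := by
  have hcA : c ∉ A := hCA c hc
  have hSc : (C \ {c}) ∪ A = (C ∪ A) \ {c} := by
    ext z
    simp only [Set.mem_union, Set.mem_diff, Set.mem_singleton_iff]
    constructor
    · rintro (⟨hz, hne⟩ | hz)
      · exact ⟨Or.inl hz, hne⟩
      · exact ⟨Or.inr hz, fun h => hcA (h ▸ hz)⟩
    · rintro ⟨hz | hz, hne⟩
      · exact Or.inl ⟨hz, hne⟩
      · exact Or.inr hz
  have hne : C \ {c} ≠ C := by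
    intro hEq
    have : c ∈ C \ {c} := hEq.symm ▸ hc
    exact this.2 rfl
  have hns := hmin (C \ {c}) Set.diff_subset hne
  rw [IsTJoinSolution] at hns
  push_neg at hns
  obtain ⟨u, hu, hodd⟩ := hns
  rw [hSc] at hu hodd
  rw [Nat.not_even_iff_odd] at hodd
  -- u is in the component of c
  have hcu : G.ReachIn (C ∪ A) c u := by
    by_contra hcu
    rw [reachIn_setOf_diff_singleton hcu] at hodd
    rw [← Nat.not_even_iff_odd] at hodd
    exact hodd (hsol u hu.1)
  -- first odd class
  have hne0 : ({w | G.ReachIn ((C ∪ A) \ {c}) u w} ∩ T).Nonempty := by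
    apply Set.nonempty_of_ncard_ne_zero
    intro h0
    rw [h0] at hodd
    simp [Nat.odd_iff] at hodd
  obtain ⟨t₀, ht₀⟩ := hne0
  have hclass_eq : {w | G.ReachIn ((C ∪ A) \ {c}) u w} =
      {w | G.ReachIn ((C ∪ A) \ {c}) t₀ w} := ht₀.1.setOf_eq
  have hodd₀ : Odd (({w | G.ReachIn ((C ∪ A) \ {c}) t₀ w} ∩ T).ncard) := by
    rw [← hclass_eq]; exact hodd
  have hr₀ : G.ReachIn (C ∪ A) c t₀ := hcu.trans (ht₀.1.mono Set.diff_subset)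
  have hTsub : ∀ z ∈ T, z ∈ (C ∪ A) \ {c} := by
    intro z hz
    refine ⟨Or.inr (hTA hz), ?_⟩
    intro he
    rw [Set.mem_singleton_iff] at he
    exact hcA (he ▸ hTA hz)
  -- second odd class
  have key : ∃ t₁, t₁ ∈ T ∧ G.ReachIn (C ∪ A) c t₁ ∧
      Odd (({w | G.ReachIn ((C ∪ A) \ {c}) t₁ w} ∩ T).ncard) ∧
      ¬ G.ReachIn ((C ∪ A) \ {c}) t₀ t₁ := by
    by_contra hno
    push_neg at hno
    have hF : Even (({w | G.ReachIn (C ∪ A) c w} ∩ T).ncard) := hsol c (Or.inl hc)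
    have hCl₀F : ({w | G.ReachIn ((C ∪ A) \ {c}) t₀ w} ∩ T) ⊆
        ({w | G.ReachIn (C ∪ A) c w} ∩ T) :=
      fun w hw => ⟨hr₀.trans (hw.1.mono Set.diff_subset), hw.2⟩
    have hevenF' : Even ((({w | G.ReachIn (C ∪ A) c w} ∩ T) \
        ({w | G.ReachIn ((C ∪ A) \ {c}) t₀ w} ∩ T)).ncard) := by
      refine even_ncard_of_classes_even (G := G) T ((C ∪ A) \ {c}) _ _ le_rfl
        (fun z hz => hTsub z hz.1.2) (fun z hz => hz.1.2) ?_
      intro t'' ht''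
      constructor
      · by_contra hodd''
        rw [Nat.not_even_iff_odd] at hodd''
        exact ht''.2 ⟨hno t'' ht''.1.2 ht''.1.1 hodd'', ht''.1.2⟩
      · intro w hw
        refine ⟨⟨ht''.1.1.trans (hw.1.mono Set.diff_subset), hw.2⟩, ?_⟩
        intro hwCl₀
        exact ht''.2 ⟨hwCl₀.1.trans hw.1.symm, ht''.1.2⟩
    have hcard : ({w | G.ReachIn (C ∪ A) c w} ∩ T).ncard =
        ({w | G.ReachIn ((C ∪ A) \ {c}) t₀ w} ∩ T).ncard +
        ((({w | G.ReachIn (C ∪ A) c w} ∩ T) \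
          ({w | G.ReachIn ((C ∪ A) \ {c}) t₀ w} ∩ T)).ncard) := by
      conv_lhs => rw [(Set.union_diff_cancel hCl₀F).symm]
      exact Set.ncard_union_eq Set.disjoint_sdiff_right
    rw [hcard, Nat.even_add] at hF
    exact (Nat.not_even_iff_odd.mpr hodd₀) (hF.mpr hevenF')
  obtain ⟨t₁, ht₁T, hr₁, hodd₁, hnr⟩ := key
  exact ⟨t₀, ht₀.2, t₁, ht₁T, hr₀, hr₁, hnr, hodd₀, hodd₁⟩

/-- The descent lemma: from an odd component attached to `c` with at most `m`
vertices of `C`, find a `T`-vertex within distance `2m+1` of `c`. -/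
lemma descent [Fintype V] (G : SimpleGraph V) (A B T C : Set V)
    (hdisj : Disjoint A B)
    (hbip : ∀ u v : V, G.Adj u v → (u ∈ A ∧ v ∈ B) ∨ (u ∈ B ∧ v ∈ A))
    (hTA : T ⊆ A) (hCB : C ⊆ B)
    (hsol : IsTJoinSolution G A T C)
    (hmin : ∀ C' : Set V, C' ⊆ C → C' ≠ C → ¬ IsTJoinSolution G A T C') :
    ∀ m : ℕ, ∀ c a : V, c ∈ C → G.Adj c a → a ∈ (C ∪ A) \ {c} →
      Odd (({w | G.ReachIn ((C ∪ A) \ {c}) a w} ∩ T).ncard) →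
      ({w | G.ReachIn ((C ∪ A) \ {c}) a w} ∩ C).ncard ≤ m →
      ∃ t' ∈ T, ∃ q : G.Walk c t', (∀ z ∈ q.support, z ∈ C ∪ A) ∧ q.length ≤ 2 * m + 1 := by
  have hCA : ∀ z ∈ C, z ∉ A := fun z hz hzA => (Set.disjoint_left.mp hdisj hzA) (hCB hz)
  have hmemA : ∀ {c' a' : V}, c' ∈ C → G.Adj c' a' → a' ∈ A := by
    intro c' a' hc' hadj
    rcases hbip c' a' hadj with ⟨h1, _⟩ | ⟨_, h2⟩
    · exact absurd h1 (hCA c' hc')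
    · exact h2
  -- first C-vertex on a walk from an A-vertex
  have firstC : ∀ (s' : Set V) (a x : V), a ∈ A → s' ⊆ C ∪ A → G.ReachIn s' a x → x ≠ a →
      ∃ w, G.Adj a w ∧ w ∈ C ∧ G.ReachIn s' a w := by
    intro s' a x haA hsub hr hxa
    obtain ⟨p, hp⟩ := hr
    cases p with
    | nil => exact absurd rfl hxa
    | @cons _ y _ h q =>
      have hymem : y ∈ (Walk.cons h q).support := by
        simp [Walk.support_cons, q.start_mem_support]
      have hyS : y ∈ s' := hp y hymem
      have hyB : y ∈ B := by
        rcases hbip a y h with ⟨_, h2⟩ | ⟨h1, _⟩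
        · exact h2
        · exact absurd h1 fun hB => (Set.disjoint_left.mp hdisj haA) hB
      have hyC : y ∈ C := by
        rcases hsub hyS with h' | h'
        · exact h'
        · exact absurd hyB (Set.disjoint_left.mp hdisj h')
      exact ⟨y, h, hyC, reachIn_of_mem_support (Walk.cons h q) hp hymem⟩
  -- base-case helper: if the reach-class of `a` has no `C`-vertex, then `a ∈ T`.
  have hbase : ∀ c a : V, c ∈ C → G.Adj c a → a ∈ (C ∪ A) \ {c} →
      Odd (({w | G.ReachIn ((C ∪ A) \ {c}) a w} ∩ T).ncard) →
      ({w | G.ReachIn ((C ∪ A) \ {c}) a w} ∩ C) = ∅ → a ∈ T := by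
    intro c a hc hadj haS hodd hemp
    have hne0 : ({w | G.ReachIn ((C ∪ A) \ {c}) a w} ∩ T).Nonempty := by
      apply Set.nonempty_of_ncard_ne_zero
      intro h0
      rw [h0] at hodd
      simp [Nat.odd_iff] at hodd
    obtain ⟨t', ht'⟩ := hne0
    by_cases hta : t' = a
    · exact hta ▸ ht'.2
    · obtain ⟨w, haw, hwC, hrw⟩ :=
        firstC ((C ∪ A) \ {c}) a t' (hmemA hc hadj) Set.diff_subset ht'.1 hta
      have : w ∈ ({w | G.ReachIn ((C ∪ A) \ {c}) a w} ∩ C) := ⟨hrw, hwC⟩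
      rw [hemp] at this
      exact absurd this (Set.notMem_empty w)
  intro m
  induction m with
  | zero =>
    intro c a hc hadj haS hodd hle
    rcases Set.eq_empty_or_nonempty ({w | G.ReachIn ((C ∪ A) \ {c}) a w} ∩ C) with hemp | hx
    · refine ⟨a, hbase c a hc hadj haS hodd hemp, Walk.cons hadj Walk.nil, ?_, by simp⟩
      intro z hz
      simp only [Walk.support_cons, Walk.support_nil, List.mem_cons, List.not_mem_nil,
        or_false] at hz
      rcases hz with rfl | rfl
      · exact Or.inl hc
      · exact haS.1
    · have := (Set.ncard_pos (Set.toFinite _)).mpr hx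
      omega
  | succ m ih =>
    intro c a hc hadj haS hodd hle
    rcases Set.eq_empty_or_nonempty ({w | G.ReachIn ((C ∪ A) \ {c}) a w} ∩ C) with hemp | hx
    · refine ⟨a, hbase c a hc hadj haS hodd hemp, Walk.cons hadj Walk.nil, ?_, by simp⟩
      intro z hz
      simp only [Walk.support_cons, Walk.support_nil, List.mem_cons, List.not_mem_nil,
        or_false] at hz
      rcases hz with rfl | rfl
      · exact Or.inl hc
      · exact haS.1
    · obtain ⟨x, hx⟩ := hx
      have haA : a ∈ A := hmemA hc hadj
      have hxa : x ≠ a := fun h => (hCA x hx.2) (h ▸ haA)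
      obtain ⟨w, haw, hwC, hrw⟩ :=
        firstC ((C ∪ A) \ {c}) a x haA Set.diff_subset hx.1 hxa
      have hwS : w ∈ (C ∪ A) \ {c} := hrw.mem_right
      obtain ⟨t₀, ht₀T, t₁, ht₁T, hr₀, hr₁, hnr, ho₀, ho₁⟩ :=
        two_odd G A T C hCA hTA hsol hmin w hwC
      -- choose the odd class not containing c
      have hpick : ∃ t', t' ∈ T ∧ G.ReachIn (C ∪ A) w t' ∧
          Odd (({z | G.ReachIn ((C ∪ A) \ {w}) t' z} ∩ T).ncard) ∧
          ¬ G.ReachIn ((C ∪ A) \ {w}) t' c := by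
        by_cases h0 : G.ReachIn ((C ∪ A) \ {w}) t₀ c
        · exact ⟨t₁, ht₁T, hr₁, ho₁, fun h1 => hnr (h0.trans h1.symm)⟩
        · exact ⟨t₀, ht₀T, hr₀, ho₀, h0⟩
      obtain ⟨t', ht'T, hwt', hoddt', hct'⟩ := hpick
      have hwt'ne : w ≠ t' := fun h => (hCA w hwC) (h ▸ hTA ht'T)
      obtain ⟨p₂, hp₂⟩ := hwt'
      obtain ⟨b, hwb, q₂, hq₂, hwq₂⟩ :=
        exists_last_exit (C ∪ A) p₂.length w t' p₂ le_rfl hwt'ne hp₂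
      have hq₂' : ∀ z ∈ q₂.support, z ∈ (C ∪ A) \ {w} := by
        intro z hz
        refine ⟨hq₂ z hz, ?_⟩
        intro he
        rw [Set.mem_singleton_iff] at he
        exact hwq₂ (he ▸ hz)
      have hbt' : G.ReachIn ((C ∪ A) \ {w}) b t' := ⟨q₂, hq₂'⟩
      have hclass : {z | G.ReachIn ((C ∪ A) \ {w}) b z} =
          {z | G.ReachIn ((C ∪ A) \ {w}) t' z} := hbt'.setOf_eq
      have hcb : c ∉ {z | G.ReachIn ((C ∪ A) \ {w}) b z} :=
        fun h => hct' (hbt'.symm.trans h)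
      have hbS : b ∈ (C ∪ A) \ {w} := hbt'.mem_left
      have hbc : b ≠ c := fun h => hcb (h ▸ reachIn_refl hbS)
      have hab : G.ReachIn ((C ∪ A) \ {c}) a b := by
        refine hrw.adj hwb ⟨hbS.1, ?_⟩
        intro he
        rw [Set.mem_singleton_iff] at he
        exact hbc he
      -- count: the new class has strictly fewer C-vertices
      have hsubset : {z | G.ReachIn ((C ∪ A) \ {w}) b z} ∩ C ⊆
          ({z | G.ReachIn ((C ∪ A) \ {c}) a z} ∩ C) \ {w} := by
        rintro z ⟨hz, hzC⟩
        obtain ⟨r, hr⟩ := hz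
        have hcr : c ∉ r.support := fun hmem => hcb (reachIn_of_mem_support r hr hmem)
        have hzR : G.ReachIn ((C ∪ A) \ {c}) b z := by
          refine ⟨r, fun y hy => ⟨(hr y hy).1, ?_⟩⟩
          intro he
          rw [Set.mem_singleton_iff] at he
          exact hcr (he ▸ hy)
        refine ⟨⟨hab.trans hzR, hzC⟩, ?_⟩
        exact (hr z r.end_mem_support).2
      have hwmem : w ∈ {z | G.ReachIn ((C ∪ A) \ {c}) a z} ∩ C := ⟨hrw, hwC⟩
      have hcount : ({z | G.ReachIn ((C ∪ A) \ {w}) b z} ∩ C).ncard ≤ m := by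
        have h1 : insert w ({z | G.ReachIn ((C ∪ A) \ {w}) b z} ∩ C) ⊆
            {z | G.ReachIn ((C ∪ A) \ {c}) a z} ∩ C := by
          intro z hz
          rcases Set.mem_insert_iff.mp hz with rfl | hz
          · exact hwmem
          · exact (hsubset hz).1
        have hwnot : w ∉ {z | G.ReachIn ((C ∪ A) \ {w}) b z} ∩ C :=
          fun h => (h.1.mem_right).2 rfl
        have h2 := Set.ncard_le_ncard h1 (Set.toFinite _)
        rw [Set.ncard_insert_of_notMem hwnot] at h2
        omega
      have hoddb : Odd (({z | G.ReachIn ((C ∪ A) \ {w}) b z} ∩ T).ncard) := by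
        rw [hclass]; exact hoddt'
      obtain ⟨t'', ht''T, q₃, hq₃, hlen₃⟩ := ih w b hwC hwb hbS hoddb hcount
      refine ⟨t'', ht''T, Walk.cons hadj (Walk.cons haw q₃), ?_, ?_⟩
      · intro z hz
        simp only [Walk.support_cons, List.mem_cons] at hz
        rcases hz with rfl | rfl | hz
        · exact Or.inl hc
        · exact Or.inr haA
        · exact hq₃ z hz
      · simp only [Walk.length_cons]
        omega

end SimpleGraph

open SimpleGraph in
/-- Let `G` be bipartite with parts `A` and `B`, `T ⊆ A`, and let
`C ⊆ B` be a minimal solution (each component of `G[C ∪ A]` has an even number of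
`T`-vertices, and no proper subset of `C` has this property). If `|C| ≤ k`, then
every vertex of `C` has distance at most `k+1` in `G[C ∪ A]` to some vertex of `T`. -/
theorem minimal_solution_close_to_terminal {V : Type*} [Fintype V]
    (G : SimpleGraph V) (A B : Set V) (hdisj : Disjoint A B) (hcover : A ∪ B = Set.univ)
    (hbip : ∀ u v : V, G.Adj u v → (u ∈ A ∧ v ∈ B) ∨ (u ∈ B ∧ v ∈ A))
    (T : Set V) (hTA : T ⊆ A) (C : Set V) (hCB : C ⊆ B) (k : ℕ)
    (hsol : IsTJoinSolution G A T C)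
    (hmin : ∀ C' : Set V, C' ⊆ C → C' ≠ C → ¬ IsTJoinSolution G A T C')
    (hsize : C.ncard ≤ k) :
    ∀ v ∈ C, ∃ t ∈ T, ∃ p : G.Walk v t,
      (∀ x ∈ p.support, x ∈ C ∪ A) ∧ p.length ≤ k + 1 := by
  intro v hv
  have hCA : ∀ z ∈ C, z ∉ A := fun z hz hzA => (Set.disjoint_left.mp hdisj hzA) (hCB hz)
  obtain ⟨t₀, ht₀T, t₁, ht₁T, hr₀, hr₁, hnr, ho₀, ho₁⟩ :=
    two_odd G A T C hCA hTA hsol hmin v hv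
  have hvt₀ : v ≠ t₀ := fun h => hCA v hv (h ▸ hTA ht₀T)
  have hvt₁ : v ≠ t₁ := fun h => hCA v hv (h ▸ hTA ht₁T)
  obtain ⟨p₀, hp₀⟩ := hr₀
  obtain ⟨p₁, hp₁⟩ := hr₁
  obtain ⟨a₀, hva₀, q₀, hq₀, hvq₀⟩ :=
    exists_last_exit (C ∪ A) p₀.length v t₀ p₀ le_rfl hvt₀ hp₀
  obtain ⟨a₁, hva₁, q₁, hq₁, hvq₁⟩ :=
    exists_last_exit (C ∪ A) p₁.length v t₁ p₁ le_rfl hvt₁ hp₁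
  have hq₀' : ∀ z ∈ q₀.support, z ∈ (C ∪ A) \ {v} := by
    intro z hz
    refine ⟨hq₀ z hz, ?_⟩
    intro he
    rw [Set.mem_singleton_iff] at he
    exact hvq₀ (he ▸ hz)
  have hq₁' : ∀ z ∈ q₁.support, z ∈ (C ∪ A) \ {v} := by
    intro z hz
    refine ⟨hq₁ z hz, ?_⟩
    intro he
    rw [Set.mem_singleton_iff] at he
    exact hvq₁ (he ▸ hz)
  have ha₀t₀ : G.ReachIn ((C ∪ A) \ {v}) a₀ t₀ := ⟨q₀, hq₀'⟩
  have ha₁t₁ : G.ReachIn ((C ∪ A) \ {v}) a₁ t₁ := ⟨q₁, hq₁'⟩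
  have ha₀S : a₀ ∈ (C ∪ A) \ {v} := ha₀t₀.mem_left
  have ha₁S : a₁ ∈ (C ∪ A) \ {v} := ha₁t₁.mem_left
  have hodda₀ : Odd (({z | G.ReachIn ((C ∪ A) \ {v}) a₀ z} ∩ T).ncard) := by
    rw [ha₀t₀.setOf_eq]; exact ho₀
  have hodda₁ : Odd (({z | G.ReachIn ((C ∪ A) \ {v}) a₁ z} ∩ T).ncard) := by
    rw [ha₁t₁.setOf_eq]; exact ho₁
  have hdisj01 : Disjoint ({z | G.ReachIn ((C ∪ A) \ {v}) a₀ z} ∩ C)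
      ({z | G.ReachIn ((C ∪ A) \ {v}) a₁ z} ∩ C) := by
    rw [Set.disjoint_left]
    rintro z ⟨hz0, _⟩ ⟨hz1, _⟩
    exact hnr (((ha₀t₀.symm.trans hz0).trans hz1.symm).trans ha₁t₁)
  have hsub01 : ({z | G.ReachIn ((C ∪ A) \ {v}) a₀ z} ∩ C) ∪
      ({z | G.ReachIn ((C ∪ A) \ {v}) a₁ z} ∩ C) ⊆ C \ {v} := by
    rintro z (⟨hz, hzC⟩ | ⟨hz, hzC⟩) <;> exact ⟨hzC, fun he => (hz.mem_right).2 he⟩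
  have hcardv : (C \ {v}).ncard + 1 = C.ncard :=
    Set.ncard_diff_singleton_add_one hv (Set.toFinite _)
  have hle01 : ({z | G.ReachIn ((C ∪ A) \ {v}) a₀ z} ∩ C).ncard +
      ({z | G.ReachIn ((C ∪ A) \ {v}) a₁ z} ∩ C).ncard ≤ (C \ {v}).ncard := by
    rw [← Set.ncard_union_eq hdisj01]
    exact Set.ncard_le_ncard hsub01 (Set.toFinite _)
  rcases le_total ({z | G.ReachIn ((C ∪ A) \ {v}) a₀ z} ∩ C).ncard
      ({z | G.ReachIn ((C ∪ A) \ {v}) a₁ z} ∩ C).ncard with h | h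
  · obtain ⟨t', ht'T, q, hq, hlen⟩ :=
      descent G A B T C hdisj hbip hTA hCB hsol hmin
        (({z | G.ReachIn ((C ∪ A) \ {v}) a₀ z} ∩ C).ncard)
        v a₀ hv hva₀ ha₀S hodda₀ le_rfl
    exact ⟨t', ht'T, q, hq, by omega⟩
  · obtain ⟨t', ht'T, q, hq, hlen⟩ :=
      descent G A B T C hdisj hbip hTA hCB hsol hmin
        (({z | G.ReachIn ((C ∪ A) \ {v}) a₁ z} ∩ C).ncard)
        v a₁ hv hva₁ ha₁S hodda₁ le_rfl
    exact ⟨t', ht'T, q, hq, by omega⟩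
end

section
/- Let H be a finite tree with vertex set partitioned into two classes A and B forming a proper 2-coloring (i.e., every edge joins A to B). Then the number of edges of H is at most the number of leaves of H lying in A plus twice the number of vertices of H lying in B. -/
/-!
In a tree on `n ≥ 2` vertices every vertex has degree at least `1`, and since every edge has
exactly one end in `A`, the degrees over `A` sum to `e = n - 1`. A vertex of `A` that is not a
leaf contributes at least `2`, so `2|A| ≤ e + ℓ_A`. Combined with `e + 1 = |A| + |B|` this gives
`|A| + 1 ≤ ℓ_A + |B|`, hence `e ≤ ℓ_A + 2|B| - 2`.
-/

open Finset

theorem Finset.two_mul_card_le_sum_add_card_filter_le_one {ι : Type*} (s : Finset ι) (f : ι → ℕ)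
    (hf : ∀ i ∈ s, 1 ≤ f i) : 2 * #s ≤ ∑ i ∈ s, f i + #{i ∈ s | f i ≤ 1} := by
  rw [card_filter, ← sum_add_distrib, mul_comm, ← smul_eq_mul, ← sum_const]
  refine sum_le_sum fun i hi ↦ ?_
  have := hf i hi
  split_ifs <;> omega

namespace SimpleGraph

variable {V : Type*} [Fintype V] [DecidableEq V] {G : SimpleGraph V} [DecidableRel G.Adj]

theorem IsTree.card_edgeFinset_le_card_leaves_add_two_mul {s t : Finset V} (hG : G.IsTree)
    (hst : G.IsBipartiteWith s t) (hcover : s ∪ t = univ) :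
    #G.edgeFinset ≤ #{v ∈ s | G.degree v ≤ 1} + 2 * #t := by
  have hE := hG.card_edgeFinset
  have hV : #s + #t = Fintype.card V := by
    rw [← card_union_of_disjoint (disjoint_coe.mp hst.disjoint), hcover, card_univ]
  cases subsingleton_or_nontrivial V
  · have := Fintype.card_le_one_iff_subsingleton.mpr ‹_›
    omega
  · have hdeg := s.two_mul_card_le_sum_add_card_filter_le_one (fun v ↦ G.degree v)
      fun v _ ↦ hG.connected.preconnected.degree_pos_of_nontrivial v
    rw [isBipartiteWith_sum_degrees_eq_card_edges hst] at hdeg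
    omega

end SimpleGraph

/-- Let `H` be a finite tree properly 2-colored with classes `A`
and `B` (every edge joins `A` to `B`). Then the number of edges of `H` is at most
the number of leaves of `H` in `A` plus twice the number of vertices in `B`. -/
theorem tree_edge_bound {V : Type*} [Fintype V] (H : SimpleGraph V)
    [DecidableRel H.Adj] (hT : H.IsTree)
    (A B : Set V) (hdisj : Disjoint A B) (hcover : A ∪ B = Set.univ)
    (hbip : ∀ u v : V, H.Adj u v → (u ∈ A ∧ v ∈ B) ∨ (u ∈ B ∧ v ∈ A)) :
    H.edgeSet.ncard ≤ {v : V | v ∈ A ∧ H.degree v ≤ 1}.ncard + 2 * B.ncard := by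
  classical
  have hAB : H.IsBipartiteWith ↑A.toFinset ↑B.toFinset := by
    simpa using SimpleGraph.IsBipartiteWith.mk hdisj hbip
  have hcover' : A.toFinset ∪ B.toFinset = univ := by
    simpa [← Set.toFinset_union] using hcover
  have hbound := hT.card_edgeFinset_le_card_leaves_add_two_mul hAB hcover'
  rw [Set.ncard_eq_toFinset_card' H.edgeSet, Set.ncard_eq_toFinset_card' B,
    Set.ncard_eq_toFinset_card']
  convert hbound using 3 <;> ext <;> simp
end

section
/- Let G be a graph, T ⊆ V(G) a set of terminals, u a non-terminal vertex, and suppose G contains k+1 pairwise internally vertex-disjoint paths between every pair of distinct neighbors v, w of u, all internally avoiding T. Then for any set X ⊆ V(G) \ T with |X| ≤ k, if X is a T-multiway cut in G, then X \ {u} is also a T-multiway cut in the graph obtained from G by deleting u and adding edges between all pairs of neighbors of u. -/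
/-- `X` is a `T`-multiway cut in `G`: `X` avoids the terminals and hits every walk
between two distinct terminals (so no component of `G \ X` has two terminals). -/
def IsMultiwayCut {V : Type*} (G : SimpleGraph V) (T X : Set V) : Prop :=
  Disjoint X T ∧ ∀ t ∈ T, ∀ t' ∈ T, t ≠ t' →
    ∀ p : G.Walk t t', ∃ x ∈ X, x ∈ p.support

/-- The graph obtained from `G` by deleting the vertex `u` and adding edges between
all pairs of neighbors of `u` (on the same vertex type; `u` becomes isolated). -/
def deleteAndComplete {V : Type*} (G : SimpleGraph V) (u : V) : SimpleGraph V :=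
  SimpleGraph.fromRel (fun x y =>
    x ≠ u ∧ y ≠ u ∧ (G.Adj x y ∨ (G.Adj u x ∧ G.Adj u y)))

lemma dac_adj {V : Type*} {G : SimpleGraph V} {u a b : V}
    (h : (deleteAndComplete G u).Adj a b) :
    a ≠ b ∧ a ≠ u ∧ b ≠ u ∧ (G.Adj a b ∨ (G.Adj u a ∧ G.Adj u b)) := by
  rw [deleteAndComplete, SimpleGraph.fromRel_adj] at h
  obtain ⟨hne, h | h⟩ := h
  · exact ⟨hne, h.1, h.2.1, h.2.2⟩
  · refine ⟨hne, h.2.1, h.1, ?_⟩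
    rcases h.2.2 with h' | h'
    · exact Or.inl h'.symm
    · exact Or.inr ⟨h'.2, h'.1⟩

lemma dac_support {V : Type*} {G : SimpleGraph V} {u a b : V}
    (p : (deleteAndComplete G u).Walk a b) (hx : u ∈ p.support) : u = a ∨ u = b := by
  induction p with
  | nil => simp at hx; exact Or.inl hx
  | cons h p ih =>
    rw [SimpleGraph.Walk.support_cons, List.mem_cons] at hx
    rcases hx with hx | hx
    · exact Or.inl hx
    · rcases ih hx with h' | h'
      · exact absurd h'.symm (dac_adj h).2.2.1
      · exact Or.inr h'

/-- Let `G` be a graph, `T` a set of terminals, `u` a non-terminal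
vertex, and suppose that between every pair of distinct neighbors `v, w` of `u`
there are `k+1` pairwise internally vertex-disjoint paths in `G`, all internally
avoiding `T`. If `X ⊆ V(G) \ T` with `|X| ≤ k` is a `T`-multiway cut in `G`, then
`X \ {u}` is a `T`-multiway cut in the graph obtained from `G` by deleting `u` and
adding edges between all pairs of neighbors of `u`. -/
theorem multiwaycut_delete_vertex {V : Type*} [Fintype V] (G : SimpleGraph V)
    (T : Set V) (u : V) (hu : u ∉ T) (k : ℕ)
    (hpaths : ∀ v w : V, G.Adj u v → G.Adj u w → v ≠ w →
      ∃ P : Fin (k + 1) → G.Walk v w,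
        (∀ i, (P i).IsPath) ∧
        (∀ i j, i ≠ j → ∀ x, x ∈ (P i).support → x ∈ (P j).support → x = v ∨ x = w) ∧
        (∀ i, ∀ x ∈ (P i).support, x ∈ T → x = v ∨ x = w))
    (X : Set V) (hXT : Disjoint X T) (hXk : X.ncard ≤ k)
    (hX : IsMultiwayCut G T X) :
    IsMultiwayCut (deleteAndComplete G u) T (X \ {u}) := by
  classical
  -- Edge replacement: any edge of the new graph can be replaced by a G-walk
  -- whose support meets X only at its endpoints.
  have edge : ∀ {a b : V}, (deleteAndComplete G u).Adj a b →
      ∃ q : G.Walk a b, ∀ x ∈ X, x ∈ q.support → x = a ∨ x = b := by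
    intro a b h
    obtain ⟨hab, hau, hbu, hcase⟩ := dac_adj h
    rcases hcase with hadj | ⟨hua, hub⟩
    · refine ⟨hadj.toWalk, ?_⟩
      intro x _ hx
      simpa using hx
    · obtain ⟨P, hPath, hDisj, hT⟩ := hpaths a b hua hub hab
      have : ∃ i, ∀ x ∈ X, x ∈ (P i).support → x = a ∨ x = b := by
        by_contra hcon
        push_neg at hcon
        choose f hfX hfS hfne using hcon
        have hinj : Set.InjOn f (Finset.univ : Finset (Fin (k+1))) := by
          intro i _ j _ hij
          by_contra hne
          rcases hDisj i j hne (f i) (hfS i) (hij ▸ hfS j) with h' | h'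
          · exact (hfne i).1 h'
          · exact (hfne i).2 h'
        have hcard : (Finset.univ : Finset (Fin (k+1))).card ≤ X.toFinset.card :=
          Finset.card_le_card_of_injOn f (fun i _ => Set.mem_toFinset.mpr (hfX i)) hinj
        rw [Finset.card_univ, Fintype.card_fin, ← Set.ncard_eq_toFinset_card'] at hcard
        omega
      obtain ⟨i, hi⟩ := this
      exact ⟨P i, hi⟩
  -- Walk replacement.
  have walkrep : ∀ {a b : V} (p : (deleteAndComplete G u).Walk a b),
      ∃ q : G.Walk a b, ∀ x ∈ X, x ∈ q.support → x ∈ p.support := by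
    intro a b p
    induction p with
    | nil => exact ⟨SimpleGraph.Walk.nil, by simp⟩
    | cons h p ih =>
      obtain ⟨q', hq'⟩ := ih
      obtain ⟨w, hw⟩ := edge h
      refine ⟨w.append q', ?_⟩
      intro x hxX hxS
      rw [SimpleGraph.Walk.mem_support_append_iff] at hxS
      rcases hxS with hxS | hxS
      · rcases hw x hxX hxS with rfl | rfl
        · simp
        · simp [SimpleGraph.Walk.support_cons, SimpleGraph.Walk.start_mem_support]
      · simp [hq' x hxX hxS]
  constructor
  · exact (hXT.mono_left Set.diff_subset)
  · intro t ht t' ht' htt' p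
    obtain ⟨q, hq⟩ := walkrep p
    obtain ⟨x, hxX, hxS⟩ := hX.2 t ht t' ht' htt' q
    refine ⟨x, ⟨hxX, ?_⟩, hq x hxX hxS⟩
    intro hxu
    rw [Set.mem_singleton_iff] at hxu
    subst hxu
    rcases dac_support p (hq x hxX hxS) with rfl | rfl
    · exact hu ht
    · exact hu ht'
end

section
/- Let G be a graph and let T be the tree obtained from G by contracting, for a partition of V(G) into classes L1, …, Lm, all edges within a class, where each class induces disjoint connected pieces. If x, y, z are vertices of T such that z lies on the unique x–y path in T with z ≠ x, z ≠ y, then the preimage κ(z) ⊆ V(G) of z is a (κ(x), κ(y))-cut in G: every path in G from κ(x) to κ(y) contains a vertex of κ(z). -/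
lemma project_walk {V W : Type*} (G : SimpleGraph V) (Tr : SimpleGraph W)
    (π : V → W) (hedge : ∀ u v : V, G.Adj u v → π u = π v ∨ Tr.Adj (π u) (π v)) :
    ∀ {a b : V} (p : G.Walk a b),
      ∃ w : Tr.Walk (π a) (π b), ∀ t ∈ w.support, ∃ c ∈ p.support, π c = t := by
  intro a b p
  induction p with
  | nil => exact ⟨SimpleGraph.Walk.nil, by simp⟩
  | @cons u v b h p ih =>
    obtain ⟨w, hw⟩ := ih
    rcases hedge u v h with heq | hadj
    · refine ⟨w.copy heq.symm rfl, ?_⟩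
      intro t ht
      rw [SimpleGraph.Walk.support_copy] at ht
      obtain ⟨c, hc, hct⟩ := hw t ht
      exact ⟨c, by simp [hc], hct⟩
    · refine ⟨SimpleGraph.Walk.cons hadj w, ?_⟩
      intro t ht
      rcases (SimpleGraph.Walk.mem_support_iff _).1 ht with rfl | ht
      · exact ⟨u, by simp, rfl⟩
      · obtain ⟨c, hc, hct⟩ := hw t ht
        exact ⟨c, by simp [hc], hct⟩

/-- Let `G` be a connected graph and let the tree `Tr` be obtained
from `G` by contracting the classes of a partition into connected pieces; this is
encoded by a surjection `π : V(G) → V(Tr)` with connected fibers such that every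
edge of `G` either stays inside a fiber or projects to an edge of `Tr`. If `z`
lies on the unique `x`–`y` path in the tree `Tr` with `z ≠ x` and `z ≠ y`, then the
fiber `κ(z) = π⁻¹(z)` is a `(κ(x), κ(y))`-cut in `G`: every walk in `G` from
`κ(x)` to `κ(y)` contains a vertex of `κ(z)`. -/
theorem fiber_is_cut {V W : Type*} (G : SimpleGraph V) (hG : G.Connected)
    (Tr : SimpleGraph W) (htree : Tr.IsTree)
    (π : V → W) (hsurj : Function.Surjective π)
    (hfiber : ∀ w : W, (G.induce (π ⁻¹' {w})).Connected)
    (hedge : ∀ u v : V, G.Adj u v → π u = π v ∨ Tr.Adj (π u) (π v))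
    (x y z : W) (hzx : z ≠ x) (hzy : z ≠ y)
    (honpath : ∃ q : Tr.Walk x y, q.IsPath ∧ z ∈ q.support) :
    ∀ a b : V, π a = x → π b = y → ∀ p : G.Walk a b, ∃ c ∈ p.support, π c = z := by
  intro a b ha hb p
  obtain ⟨w, hw⟩ := project_walk G Tr π hedge p
  classical
  subst ha; subst hb
  obtain ⟨q, hq, hzq⟩ := honpath
  obtain ⟨P, hP, huniq⟩ := htree.existsUnique_path (π a) (π b)
  have h1 : q = P := huniq q hq
  have h2 : w.bypass = P := huniq w.bypass w.bypass_isPath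
  have : z ∈ w.support := w.support_bypass_subset (h2 ▸ h1 ▸ hzq)
  exact hw z this
end

section
/- Let G be a graph with a partition of its vertex set into T ⊎ D ⊎ U where U is an independent set and no vertex of T is adjacent to a vertex of T. Suppose the subset U' ⊆ U is obtained by exhaustively removing any u ∈ U whose neighborhood is contained in the neighborhood of another remaining vertex v ∈ U. Then for any X ⊆ D: the set X is a T-multiway cut in G[T ∪ D ∪ U'] if and only if X is a T-multiway cut in G. -/
/-- `X` is a `T`-multiway cut of the subgraph of `G` induced by the vertex set `S`:
`X` avoids the terminals, and every walk between two distinct terminals that stays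
inside `S` is hit by `X`. -/
def IsMultiwayCutIn {V : Type*} (G : SimpleGraph V) (S T X : Set V) : Prop :=
  Disjoint X T ∧ ∀ t ∈ T, ∀ t' ∈ T, t ≠ t' →
    ∀ p : G.Walk t t', (∀ x ∈ p.support, x ∈ S) → ∃ x ∈ X, x ∈ p.support

lemma key_walk_replace {V : Type*} (G : SimpleGraph V) (T D U U' : Set V)
    (hcover : T ∪ D ∪ U = Set.univ)
    (hUind : ∀ u ∈ U, ∀ v ∈ U, ¬ G.Adj u v)
    (hU'U : U' ⊆ U)
    (hdominate : ∀ u ∈ U, ∃ v ∈ U', G.neighborSet u ⊆ G.neighborSet v)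
    (a b : V) (p : G.Walk a b) (ha : a ∈ T ∪ D ∪ U') (hb : b ∈ T ∪ D ∪ U') :
    ∃ q : G.Walk a b, (∀ x ∈ q.support, x ∈ T ∪ D ∪ U') ∧
      (∀ x ∈ q.support, x ∈ U ∨ x ∈ p.support) := by
  match p with
  | .nil => exact ⟨.nil, by simpa using ha, by simp⟩
  | .cons (v := c) h p' =>
    by_cases hc : c ∈ T ∪ D ∪ U'
    · obtain ⟨q', hq1, hq2⟩ := key_walk_replace G T D U U' hcover hUind hU'U hdominate
        c b p' hc hb
      refine ⟨.cons h q', ?_, ?_⟩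
      · intro x hx
        simp only [SimpleGraph.Walk.support_cons, List.mem_cons] at hx
        rcases hx with rfl | hx
        · exact ha
        · exact hq1 x hx
      · intro x hx
        simp only [SimpleGraph.Walk.support_cons, List.mem_cons] at hx
        rcases hx with rfl | hx
        · exact Or.inr (by simp)
        · rcases hq2 x hx with h1 | h1
          · exact Or.inl h1
          · exact Or.inr (by simp [h1])
    · have hcU : c ∈ U := by
        have : c ∈ T ∪ D ∪ U := hcover ▸ Set.mem_univ c
        rcases this with (h1 | h1) | h1
        · exact absurd (Or.inl (Or.inl h1)) hc
        · exact absurd (Or.inl (Or.inr h1)) hc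
        · exact h1
      obtain ⟨v, hvU', hvdom⟩ := hdominate c hcU
      have hav : G.Adj a v := (hvdom (h.symm : G.Adj c a)).symm
      match p' with
      | .nil => exact absurd hb hc
      | .cons (v := d) h2 p'' =>
        have hvd : G.Adj v d := hvdom h2
        have hdS : d ∈ T ∪ D ∪ U' := by
          have hdnU : d ∉ U := fun hd => hUind c hcU d hd h2
          have : d ∈ T ∪ D ∪ U := hcover ▸ Set.mem_univ d
          rcases this with (h1 | h1) | h1
          · exact Or.inl (Or.inl h1)
          · exact Or.inl (Or.inr h1)
          · exact absurd h1 hdnU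
        obtain ⟨q'', hq1, hq2⟩ := key_walk_replace G T D U U' hcover hUind hU'U hdominate
          d b p'' hdS hb
        refine ⟨.cons hav (.cons hvd q''), ?_, ?_⟩
        · intro x hx
          simp only [SimpleGraph.Walk.support_cons, List.mem_cons] at hx
          rcases hx with rfl | rfl | hx
          · exact ha
          · exact Or.inr hvU'
          · exact hq1 x hx
        · intro x hx
          simp only [SimpleGraph.Walk.support_cons, List.mem_cons] at hx
          rcases hx with rfl | rfl | hx
          · exact Or.inr (by simp)
          · exact Or.inl (hU'U hvU')
          · rcases hq2 x hx with h1 | h1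
            · exact Or.inl h1
            · exact Or.inr (by simp [h1])
termination_by p.length

/-- Let `G` have vertex set partitioned as `T ⊎ D ⊎ U`, where `U`
and `T` are independent sets. Let `U' ⊆ U` be obtained by exhaustively removing
vertices of `U` whose neighborhood is contained in the neighborhood of another
remaining vertex of `U`; thus `U'` has pairwise incomparable neighborhoods and
every `u ∈ U` has its neighborhood contained in that of some `v ∈ U'`. Then for
every `X ⊆ D`, the set `X` is a `T`-multiway cut in `G[T ∪ D ∪ U']` iff it is a
`T`-multiway cut in `G`. -/
theorem multiwaycut_reduce_independent_set {V : Type*} (G : SimpleGraph V)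
    (T D U : Set V)
    (hTD : Disjoint T D) (hTU : Disjoint T U) (hDU : Disjoint D U)
    (hcover : T ∪ D ∪ U = Set.univ)
    (hUind : ∀ u ∈ U, ∀ v ∈ U, ¬ G.Adj u v)
    (hTind : ∀ u ∈ T, ∀ v ∈ T, ¬ G.Adj u v)
    (U' : Set V) (hU'U : U' ⊆ U)
    (hdominate : ∀ u ∈ U, ∃ v ∈ U', G.neighborSet u ⊆ G.neighborSet v)
    (hantichain : ∀ u ∈ U', ∀ v ∈ U', u ≠ v → ¬ G.neighborSet u ⊆ G.neighborSet v)
    (X : Set V) (hXD : X ⊆ D) :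
    IsMultiwayCutIn G (T ∪ D ∪ U') T X ↔ IsMultiwayCutIn G Set.univ T X := by
  constructor
  · rintro ⟨hdisj, hcut⟩
    refine ⟨hdisj, fun t ht t' ht' hne p _ => ?_⟩
    obtain ⟨q, hq1, hq2⟩ := key_walk_replace G T D U U' hcover hUind hU'U hdominate
      t t' p (Or.inl (Or.inl ht)) (Or.inl (Or.inl ht'))
    obtain ⟨x, hxX, hxq⟩ := hcut t ht t' ht' hne q hq1
    rcases hq2 x hxq with h1 | h1
    · exact absurd h1 (Set.disjoint_left.1 hDU (hXD hxX))
    · exact ⟨x, hxX, h1⟩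
  · rintro ⟨hdisj, hcut⟩
    exact ⟨hdisj, fun t ht t' ht' hne p _ => hcut t ht t' ht' hne p (fun x _ => Set.mem_univ x)⟩
end
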